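/- arXiv:1406.2660 — 2 statements merged into one kernel-verified Lean document; each statement's English description precedes it below -/
import Mathlib

section
/- Let π be a positive density on Θ and q a positive proposal kernel density with π(θ)q(θ,η)/(π(η)q(η,θ)) = ∏_{k=1}^d ρ_k(η,θ), where each ρ_k satisfies the reversal property ρ_k(η,θ) = 1/ρ_k(θ,η). Then π(η)q(η,θ)·∏_{k=1}^d min(ρ_k(η,θ),1) = π(θ)q(θ,η)·∏_{k=1}^d min(ρ_k(θ,η),1), i.e. the delayed-acceptance kernel satisfies detailed balance with respect to π. -/
theorem delayed_acceptance_detailed_balance {Θ : Type*} (d : ℕ)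
    (π : Θ → ℝ) (q : Θ → Θ → ℝ) (ρ : Fin d → Θ → Θ → ℝ)
    (hπ : ∀ θ, 0 < π θ) (hq : ∀ η θ, 0 < q η θ)
    (hρ : ∀ k η θ, 0 < ρ k η θ)
    (hrev : ∀ k η θ, ρ k η θ * ρ k θ η = 1)
    (hprod : ∀ η θ, π θ * q θ η / (π η * q η θ) = ∏ k, ρ k η θ) :
    ∀ η θ : Θ,
      π η * q η θ * ∏ k, min (ρ k η θ) 1 =
      π θ * q θ η * ∏ k, min (ρ k θ η) 1 := by
  intro η θ
  have key : ∀ k, min (ρ k η θ) 1 = ρ k η θ * min (ρ k θ η) 1 := by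
    intro k
    rw [mul_min_of_nonneg _ _ (hρ k η θ).le, hrev k η θ, mul_one, min_comm]
  calc π η * q η θ * ∏ k, min (ρ k η θ) 1
      = π η * q η θ * ((∏ k, ρ k η θ) * ∏ k, min (ρ k θ η) 1) := by
        rw [← Finset.prod_mul_distrib]
        exact congrArg _ (Finset.prod_congr rfl fun k _ => key k)
    _ = π θ * q θ η * ∏ k, min (ρ k θ η) 1 := by
        have h0 : π η * q η θ ≠ 0 := (mul_pos (hπ η) (hq η θ)).ne'
        rw [← hprod η θ, ← mul_assoc, mul_div_assoc',
          mul_comm (π η * q η θ) (π θ * q θ η), mul_div_cancel_right₀ _ h0]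
end

section
/- With the setup of the delayed-acceptance kernel P and the standard Metropolis kernel M(η,θ) = q(η,θ)·min(∏_k ρ_k(η,θ), 1) for θ ≠ η, one has P(η,θ) ≤ M(η,θ) for all θ ≠ η. Consequently M dominates P in the off-diagonal (Peskun) ordering. -/
theorem peskun_domination {Θ : Type*} [Countable Θ] (d : ℕ)
    (π : Θ → ℝ) (ρ : Fin d → Θ → Θ → ℝ) (q : Θ → Θ → ℝ)
    (hπ : ∀ θ, 0 < π θ)
    (hρ : ∀ k η θ, 0 < ρ k η θ)
    (hfact : ∀ η θ, π θ / π η = ∏ k, ρ k η θ)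
    (hq0 : ∀ η θ, 0 ≤ q η θ) (hqsym : ∀ η θ, q η θ = q θ η) :
    ∀ η θ, θ ≠ η →
      q η θ * ∏ k, min (ρ k η θ) 1 ≤ q η θ * min (∏ k, ρ k η θ) 1 := by
  intro η θ _
  refine mul_le_mul_of_nonneg_left (le_min ?_ ?_) (hq0 η θ)
  · exact Finset.prod_le_prod (fun k _ => le_min (hρ k η θ).le zero_le_one)
      (fun k _ => min_le_left _ _)
  · calc ∏ k, min (ρ k η θ) 1 ≤ ∏ k : Fin d, 1 :=
          Finset.prod_le_prod (fun k _ => le_min (hρ k η θ).le zero_le_one)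
            (fun k _ => min_le_right _ _)
       _ = 1 := Finset.prod_const_one
end
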